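/- Let n ≥ i ≥ 1 be natural numbers and let 2k = 2^v be the largest power of 2 dividing i (so v = padicValNat 2 i and k = 2^(v-1), with the convention that if i is odd one takes 2k = 1, handled separately). If i is even and 2k is the largest power of 2 dividing i, then C(n, 2k) ≢ C(n - i, 2k) (mod 2). -/

import Mathlib

/-! By Lucas' theorem `C(n, p ^ v) ≡ ⌊n / p ^ v⌋ (mod p)`. Writing `i = p ^ v * q` with `p ∤ q`,
the quotients `⌊n / p ^ v⌋` and `⌊(n - i) / p ^ v⌋` differ by `q`, which is nonzero mod `p`. -/

namespace Nat

variable {p : ℕ} [Fact p.Prime]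

theorem choose_prime_pow_modEq_div (n v : ℕ) : n.choose (p ^ v) ≡ n / p ^ v [MOD p] := by
  induction v generalizing n with
  | zero => simp [choose_one_right, ModEq.refl]
  | succ v ih =>
    have hp : 0 < p := Fact.out (p := p.Prime) |>.pos
    calc n.choose (p ^ (v + 1))
        ≡ (n % p).choose (p ^ (v + 1) % p) * (n / p).choose (p ^ (v + 1) / p) [MOD p] :=
          Choose.choose_modEq_choose_mod_mul_choose_div_nat
      _ = (n / p).choose (p ^ v) := by
          rw [pow_succ, mul_mod_left, Nat.mul_div_cancel _ hp, choose_zero_right, one_mul]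
      _ ≡ n / p / p ^ v [MOD p] := ih _
      _ = n / p ^ (v + 1) := by rw [Nat.div_div_eq_div_mul, pow_succ']

theorem choose_pow_padicValNat_not_modEq_choose_sub {n i : ℕ} (hi : i ≠ 0) (hin : i ≤ n) :
    ¬ n.choose (p ^ padicValNat p i) ≡ (n - i).choose (p ^ padicValNat p i) [MOD p] := by
  obtain ⟨q, hq⟩ : p ^ padicValNat p i ∣ i := pow_padicValNat_dvd
  have hq_ndvd : ¬ p ∣ q := fun ⟨r, hr⟩ =>
    pow_succ_padicValNat_not_dvd hi ⟨r, hq.trans (by rw [hr, pow_succ, mul_assoc])⟩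
  generalize padicValNat p i = v at hq
  obtain ⟨m, rfl⟩ : ∃ m, n = m + i := ⟨n - i, by omega⟩
  rw [Nat.add_sub_cancel]
  have hdiv : (m + i) / p ^ v = m / p ^ v + q := by
    rw [hq, add_mul_div_left _ _ (pow_pos (Fact.out (p := p.Prime)).pos v)]
  intro h
  have hmod : m / p ^ v + q ≡ m / p ^ v + 0 [MOD p] := by
    simpa [hdiv] using
      (choose_prime_pow_modEq_div (m + i) v).symm.trans (h.trans (choose_prime_pow_modEq_div m v))
  exact hq_ndvd (modEq_zero_iff_dvd.mp (ModEq.add_left_cancel' _ hmod))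

end Nat

theorem choose_ne_mod_two_general (n i : ℕ) (h1 : 1 ≤ i) (hin : i ≤ n) :
    Nat.choose n (2 ^ padicValNat 2 i) % 2 ≠
      Nat.choose (n - i) (2 ^ padicValNat 2 i) % 2 :=
  Nat.choose_pow_padicValNat_not_modEq_choose_sub (by omega) hin

/-- For `1 ≤ i ≤ n` with `i` even, and `2k = 2^(padicValNat 2 i)` the largest
power of two dividing `i`, the binomial coefficients `C(n, 2k)` and
`C(n-i, 2k)` have different parities. -/
theorem choose_ne_mod_two (n i : ℕ) (h1 : 1 ≤ i) (hin : i ≤ n) (heven : Even i) :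
    Nat.choose n (2 ^ padicValNat 2 i) % 2 ≠
      Nat.choose (n - i) (2 ^ padicValNat 2 i) % 2 :=
  choose_ne_mod_two_general n i h1 hin
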